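/- arXiv:math/9406209 — 2 statements merged into one kernel-verified Lean document; each statement's English description precedes it below -/
import Mathlib

section
/- Let $X$ be a lattice-ordered abelian group and $x, y \in X$. Then $(y^+ - y^+ \wedge |x|) \wedge (x^- - x^- \wedge |y|) = 0$. -/
/-!
Since `a - a ⊓ b = (a - b)⁺`, the two terms are `(y⁺ - |x|)⁺` and `(x⁻ - |y|)⁺`, which are bounded
by `(|y| - |x|)⁺` and `(|x| - |y|)⁺ = (|y| - |x|)⁻`. The positive and negative parts of an element
are disjoint.
-/

section

variable {α : Type*} [Lattice α] [AddCommGroup α] [AddLeftMono α]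

lemma sub_inf_eq_posPart_sub (a b : α) : a - a ⊓ b = (a - b)⁺ := by
  rw [inf_eq_sub_posPart_sub, sub_sub_cancel]

lemma posPart_le_abs (a : α) : a⁺ ≤ |a| := sup_le (le_abs_self a) (abs_nonneg a)

lemma negPart_le_abs (a : α) : a⁻ ≤ |a| := sup_le (neg_le_abs a) (abs_nonneg a)

end

/-- In a lattice-ordered abelian group `X`, for `x y : X`:
`(y⁺ - y⁺ ⊓ |x|) ⊓ (x⁻ - x⁻ ⊓ |y|) = 0`, where `z⁺ = z ⊔ 0` and `z⁻ = (-z) ⊔ 0`. -/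
theorem inf_pos_part_neg_part_sub_eq_zero {X : Type*} [Lattice X] [AddCommGroup X]
    [CovariantClass X X (· + ·) (· ≤ ·)] (x y : X) :
    ((y ⊔ 0) - (y ⊔ 0) ⊓ |x|) ⊓ (((-x) ⊔ 0) - ((-x) ⊔ 0) ⊓ |y|) = 0 := by
  change (y⁺ - y⁺ ⊓ |x|) ⊓ (x⁻ - x⁻ ⊓ |y|) = 0
  rw [sub_inf_eq_posPart_sub, sub_inf_eq_posPart_sub]
  refine le_antisymm ?_ (le_inf (posPart_nonneg _) (posPart_nonneg _))
  calc (y⁺ - |x|)⁺ ⊓ (x⁻ - |y|)⁺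
      ≤ (|y| - |x|)⁺ ⊓ (|x| - |y|)⁺ :=
        inf_le_inf (posPart_mono (sub_le_sub_right (posPart_le_abs y) _))
          (posPart_mono (sub_le_sub_right (negPart_le_abs x) _))
    _ = (|y| - |x|)⁺ ⊓ (|y| - |x|)⁻ := by rw [← posPart_neg, neg_sub]
    _ = 0 := posPart_inf_negPart_eq_zero _
end

section
/- Let $X$ be a Banach lattice and suppose there is a constant $c$ with $0 < c < 2$ such that $c\,\|x + y\| \ge \|x\| + \|y\|$ for all disjoint $x, y \in X$. Then, with $p = \frac{2\log 2}{\log(2/c)}$, there exists a constant $C > 0$ such that for every $m \ge 1$ and every family $(x_i)_{1 \le i \le m}$ of pairwise disjoint elements of $X$, $\min_{1 \le i \le m} \|x_i\| \le \frac{C}{m^{1/p}} \big\|\sum_{i=1}^{m} x_i\big\|$. -/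
/-!
Halve repeatedly. A disjoint family of `2 ^ (k + 1)` vectors splits into two halves of `2 ^ k`
members whose sums `a`, `b` are again disjoint (for positive elements
`(a + b) ⊓ c ≤ a ⊓ c + b ⊓ c`), and `‖a‖ + ‖b‖ ≤ c ‖a + b‖` puts one half below
`(c / 2) ‖a + b‖`. After `k` halvings some `xᵢ` has `‖xᵢ‖ ≤ (c / 2) ^ k ‖∑ xᵢ‖`. For general `m`
take `k = ⌊log₂ m⌋` and a subfamily of `2 ^ k` members, whose sum costs one more factor `c`; as
`m ^ log₂ (2 / c) ≤ (2 / c) ^ (k + 1)`, this gives the claim with `C = 2`, even for the larger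
exponent `log₂ (2 / c) = 2 / p`.
-/

open Finset

section LatticeOrderedGroup

variable {X : Type*} [AddCommGroup X] [Lattice X] [IsOrderedAddMonoid X]

theorem add_inf_le_inf_add_inf {a b c : X} (ha : 0 ≤ a) (hb : 0 ≤ b) (hc : 0 ≤ c) :
    (a + b) ⊓ c ≤ a ⊓ c + b ⊓ c := by
  rw [inf_add, add_inf, add_inf]
  refine le_inf (le_inf inf_le_left ?_) (le_inf ?_ ?_)
  · exact inf_le_right.trans (le_add_of_nonneg_left ha)
  · exact inf_le_right.trans (le_add_of_nonneg_right hb)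
  · exact inf_le_right.trans (le_add_of_nonneg_left hc)

theorem Finset.sum_inf_le_sum_inf {ι : Type*} (s : Finset ι) {a : ι → X} {c : X}
    (ha : ∀ i ∈ s, 0 ≤ a i) (hc : 0 ≤ c) :
    (∑ i ∈ s, a i) ⊓ c ≤ ∑ i ∈ s, a i ⊓ c :=
  le_sum_of_subadditive_on_pred (· ⊓ c) (0 ≤ ·) inf_le_left
    (fun _ _ hx hy => add_inf_le_inf_add_inf hx hy hc) (fun _ _ => add_nonneg) a ha

theorem Finset.abs_sum_inf_abs_sum_eq_zero {ι : Type*} {s t : Finset ι} {x : ι → X}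
    (hx : ∀ i ∈ s, ∀ j ∈ t, |x i| ⊓ |x j| = 0) :
    |∑ i ∈ s, x i| ⊓ |∑ j ∈ t, x j| = 0 := by
  refine le_antisymm ?_ (le_inf (abs_nonneg _) (abs_nonneg _))
  calc |∑ i ∈ s, x i| ⊓ |∑ j ∈ t, x j| ≤ (∑ i ∈ s, |x i|) ⊓ ∑ j ∈ t, |x j| :=
        inf_le_inf (le_sum_of_subadditive _ abs_zero.le abs_add_le s x)
          (le_sum_of_subadditive _ abs_zero.le abs_add_le t x)
    _ ≤ ∑ i ∈ s, |x i| ⊓ ∑ j ∈ t, |x j| :=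
        s.sum_inf_le_sum_inf (fun _ _ => abs_nonneg _) (sum_nonneg fun _ _ => abs_nonneg _)
    _ ≤ ∑ i ∈ s, ∑ j ∈ t, |x i| ⊓ |x j| := sum_le_sum fun i _ => by
        simpa only [inf_comm] using
          t.sum_inf_le_sum_inf (a := fun j => |x j|) (fun _ _ => abs_nonneg _) (abs_nonneg (x i))
    _ = 0 := sum_eq_zero fun i hi => sum_eq_zero fun j hj => hx i hi j hj

theorem Finset.abs_sum_inf_abs_sum_sdiff_eq_zero {ι : Type*} [DecidableEq ι] {x : ι → X}
    (hx : Pairwise fun i j => |x i| ⊓ |x j| = 0) (s t : Finset ι) :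
    |∑ i ∈ t, x i| ⊓ |∑ j ∈ s \ t, x j| = 0 :=
  abs_sum_inf_abs_sum_eq_zero fun _ hi _ hj => hx fun hij => (mem_sdiff.mp hj).2 (hij ▸ hi)

end LatticeOrderedGroup

section DisjointEstimate

variable {X : Type*} [NormedAddCommGroup X] [Lattice X] {c : ℝ}

theorem norm_le_mul_norm_add_of_disjoint
    (hest : ∀ x y : X, |x| ⊓ |y| = 0 → ‖x‖ + ‖y‖ ≤ c * ‖x + y‖) {a b : X}
    (hab : |a| ⊓ |b| = 0) : ‖a‖ ≤ c * ‖a + b‖ := by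
  linarith [hest a b hab, norm_nonneg b]

theorem min_norm_le_half_mul_norm_add_of_disjoint
    (hest : ∀ x y : X, |x| ⊓ |y| = 0 → ‖x‖ + ‖y‖ ≤ c * ‖x + y‖) {a b : X}
    (hab : |a| ⊓ |b| = 0) : min ‖a‖ ‖b‖ ≤ c / 2 * ‖a + b‖ := by
  linarith [hest a b hab, min_le_left ‖a‖ ‖b‖, min_le_right ‖a‖ ‖b‖]

variable [IsOrderedAddMonoid X] {ι : Type*} {x : ι → X}

theorem exists_mem_norm_le_pow_mul_norm_sum (hc : 0 ≤ c)
    (hest : ∀ x y : X, |x| ⊓ |y| = 0 → ‖x‖ + ‖y‖ ≤ c * ‖x + y‖)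
    (hx : Pairwise fun i j => |x i| ⊓ |x j| = 0) (k : ℕ) {s : Finset ι} (hs : #s = 2 ^ k) :
    ∃ i ∈ s, ‖x i‖ ≤ (c / 2) ^ k * ‖∑ j ∈ s, x j‖ := by
  classical
  induction k generalizing s with
  | zero =>
    obtain ⟨i, rfl⟩ := card_eq_one.mp hs
    exact ⟨i, mem_singleton_self i, by simp⟩
  | succ k ih =>
    obtain ⟨t, hts, ht⟩ : ∃ t ⊆ s, #t = 2 ^ k :=
      exists_subset_card_eq (by rw [hs, pow_succ]; omega)
    have hst : #(s \ t) = 2 ^ k := by rw [card_sdiff_of_subset hts, hs, ht, pow_succ]; omega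
    have hhalf := min_norm_le_half_mul_norm_add_of_disjoint hest
      (abs_sum_inf_abs_sum_sdiff_eq_zero hx s t)
    rw [add_comm, sum_sdiff hts] at hhalf
    suffices ∃ u ⊆ s, #u = 2 ^ k ∧ ‖∑ j ∈ u, x j‖ ≤ c / 2 * ‖∑ j ∈ s, x j‖ by
      obtain ⟨u, hus, hu, hu_sum⟩ := this
      obtain ⟨i, hiu, hi⟩ := ih hu
      refine ⟨i, hus hiu, hi.trans ?_⟩
      rw [pow_succ, mul_assoc]
      gcongr
    rcases min_le_iff.mp hhalf with h | h
    · exact ⟨t, hts, ht, h⟩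
    · exact ⟨s \ t, sdiff_subset, hst, h⟩

theorem exists_mem_norm_le_mul_pow_mul_norm_sum_of_pow_le_card (hc : 0 ≤ c)
    (hest : ∀ x y : X, |x| ⊓ |y| = 0 → ‖x‖ + ‖y‖ ≤ c * ‖x + y‖)
    (hx : Pairwise fun i j => |x i| ⊓ |x j| = 0) {k : ℕ} {s : Finset ι} (hs : 2 ^ k ≤ #s) :
    ∃ i ∈ s, ‖x i‖ ≤ c * (c / 2) ^ k * ‖∑ j ∈ s, x j‖ := by
  classical
  obtain ⟨t, hts, ht⟩ := exists_subset_card_eq hs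
  obtain ⟨i, hit, hi⟩ := exists_mem_norm_le_pow_mul_norm_sum hc hest hx k ht
  have hsub := norm_le_mul_norm_add_of_disjoint hest (abs_sum_inf_abs_sum_sdiff_eq_zero hx s t)
  rw [add_comm, sum_sdiff hts] at hsub
  refine ⟨i, hts hit, hi.trans ?_⟩
  rw [mul_comm c, mul_assoc]
  gcongr

end DisjointEstimate

theorem Real.natCast_rpow_logb_le_pow_succ_log {a : ℝ} (ha : 1 ≤ a) (m : ℕ) :
    (m : ℝ) ^ Real.logb 2 a ≤ a ^ (Nat.log 2 m + 1) := by
  have hm : (m : ℝ) ≤ 2 ^ (Nat.log 2 m + 1) := by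
    exact_mod_cast (Nat.lt_pow_succ_log_self one_lt_two m).le
  calc (m : ℝ) ^ Real.logb 2 a ≤ ((2 : ℝ) ^ (Nat.log 2 m + 1)) ^ Real.logb 2 a :=
        Real.rpow_le_rpow m.cast_nonneg hm (Real.logb_nonneg one_lt_two ha)
    _ = a ^ (Nat.log 2 m + 1) := by
        rw [← Real.rpow_pow_comm zero_le_two, Real.rpow_logb two_pos (by norm_num) (by linarith)]

theorem iInf_norm_le_div_rpow_mul_norm_sum_general {X : Type*} [NormedAddCommGroup X] [Lattice X]
    [IsOrderedAddMonoid X]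
    (c : ℝ) (hc0 : 0 < c) (hc2 : c < 2)
    (hest : ∀ x y : X, |x| ⊓ |y| = 0 → ‖x‖ + ‖y‖ ≤ c * ‖x + y‖) :
    ∃ C > (0 : ℝ), ∀ (m : ℕ), 1 ≤ m → ∀ x : Fin m → X,
      (Pairwise fun i j => |x i| ⊓ |x j| = 0) →
      ⨅ i, ‖x i‖ ≤
        C / (m : ℝ) ^ (1 / (2 * Real.log 2 / Real.log (2 / c))) * ‖∑ i, x i‖ := by
  refine ⟨2, two_pos, fun m hm x hx => ?_⟩
  set k := Nat.log 2 m
  set q := 1 / (2 * Real.log 2 / Real.log (2 / c)) with hq_def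
  obtain ⟨i, -, hi⟩ := exists_mem_norm_le_mul_pow_mul_norm_sum_of_pow_le_card hc0.le hest hx
    (s := univ) (k := k) (by simpa using Nat.pow_log_le_self 2 (by omega))
  have hc2' : 1 ≤ 2 / c := by rw [le_div_iff₀ hc0]; linarith
  have hq : q ≤ Real.logb 2 (2 / c) := by
    rw [hq_def, one_div_div, Real.logb]
    exact div_le_div_of_nonneg_left (Real.log_nonneg hc2') (Real.log_pos one_lt_two) (by
      linarith [Real.log_pos one_lt_two])
  have hmq : (m : ℝ) ^ q ≤ (2 / c) ^ (k + 1) :=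
    (Real.rpow_le_rpow_of_exponent_le (by exact_mod_cast hm) hq).trans
      (Real.natCast_rpow_logb_le_pow_succ_log hc2' m)
  have hconst : c * (c / 2) ^ k * (2 / c) ^ (k + 1) = 2 := by
    rw [pow_succ, ← mul_assoc, mul_assoc c, ← mul_pow, div_mul_div_cancel₀ two_ne_zero,
      div_self hc0.ne', one_pow, mul_one, mul_div_cancel₀ _ hc0.ne']
  calc ⨅ i, ‖x i‖ ≤ ‖x i‖ := ciInf_le ⟨0, Set.forall_mem_range.mpr fun _ => norm_nonneg _⟩ i
    _ ≤ c * (c / 2) ^ k * ‖∑ j, x j‖ := hi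
    _ ≤ 2 / (m : ℝ) ^ q * ‖∑ j, x j‖ := by
        gcongr
        rw [le_div_iff₀ (by positivity)]
        exact (mul_le_mul_of_nonneg_left hmq (by positivity)).trans_eq hconst

/-- Let `X` be a Banach lattice and `0 < c < 2` a constant such that
`‖x‖ + ‖y‖ ≤ c‖x + y‖` for all disjoint `x, y`. Then, with
`p = 2 log 2 / log (2/c)`, there is a constant `C > 0` such that for every
`m ≥ 1` and every pairwise disjoint family `(xᵢ)_{i < m}`,
`⨅ i, ‖xᵢ‖ ≤ (C / m^(1/p)) ‖∑ xᵢ‖`. -/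
theorem iInf_norm_le_div_rpow_mul_norm_sum {X : Type*} [NormedAddCommGroup X] [Lattice X]
    [HasSolidNorm X] [IsOrderedAddMonoid X]
    [CompleteSpace X] (c : ℝ) (hc0 : 0 < c) (hc2 : c < 2)
    (hest : ∀ x y : X, |x| ⊓ |y| = 0 → ‖x‖ + ‖y‖ ≤ c * ‖x + y‖) :
    ∃ C > (0 : ℝ), ∀ (m : ℕ), 1 ≤ m → ∀ x : Fin m → X,
      (Pairwise fun i j => |x i| ⊓ |x j| = 0) →
      ⨅ i, ‖x i‖ ≤
        C / (m : ℝ) ^ (1 / (2 * Real.log 2 / Real.log (2 / c))) * ‖∑ i, x i‖ :=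
  iInf_norm_le_div_rpow_mul_norm_sum_general c hc0 hc2 hest
end
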